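/- For every even integer r ≥ 2, Li₂(α^r/L_r) + Li₂(β^r/L_r) = π²/6 + r²·ln²(α) - ln²(L_r), where L_r = α^r + β^r is the r-th Lucas number, α = (1+√5)/2 and β = (1-√5)/2. -/

import Mathlib

noncomputable def Li2 (x : ℝ) : ℝ := ∑' n : ℕ, x ^ (n + 1) / ((n : ℝ) + 1) ^ 2

def lucas : ℕ → ℕ
  | 0 => 2
  | 1 => 1
  | n + 2 => lucas (n + 1) + lucas n

/-!
Euler's reflection formula `Li₂(x) + Li₂(1 - x) = π²/6 - log x · log (1 - x)` on `(0, 1)`: the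
left side plus `log x · log (1 - x)` has derivative zero, and tends to `Li₂(0) + Li₂(1) = ζ(2)` as
`x → 0⁺`. Apply it at `x = α^r / L_r`. Since `αβ = -1` and `r` is even, `β^r = α^{-r}`, so
`1 - x = β^r / L_r` and the two logarithms are `±r log α - log L_r`.
-/

open Real Filter Set Topology
open scoped goldenRatio

lemma hasSum_one_div_nat_add_one_sq :
    HasSum (fun n : ℕ => 1 / ((n : ℝ) + 1) ^ 2) (π ^ 2 / 6) := by
  simpa using (hasSum_nat_add_iff' 1).mpr hasSum_zeta_two

lemma Li2_zero : Li2 0 = 0 := by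
  simp [Li2]

lemma Li2_one : Li2 1 = π ^ 2 / 6 := by
  simpa [Li2] using hasSum_one_div_nat_add_one_sq.tsum_eq

lemma continuousOn_Li2 : ContinuousOn Li2 (Icc (-1) 1) := by
  refine continuousOn_tsum (fun n => (continuousOn_pow _).div_const _)
    hasSum_one_div_nat_add_one_sq.summable fun n x hx => ?_
  rw [norm_div, norm_pow, norm_pow, Real.norm_of_nonneg (by positivity : (0 : ℝ) ≤ n + 1)]
  gcongr
  exact pow_le_one₀ (norm_nonneg x) (abs_le.mpr hx)

lemma hasSum_pow_div_nat_add_one {x : ℝ} (hx0 : x ≠ 0) (hx : |x| < 1) :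
    HasSum (fun n : ℕ => x ^ n / ((n : ℝ) + 1)) (-log (1 - x) / x) := by
  have h := (hasSum_pow_div_log_of_abs_lt_one hx).div_const x
  rwa [show (fun n : ℕ => x ^ (n + 1) / (n + 1) / x) = fun n : ℕ => x ^ n / ((n : ℝ) + 1) by
    funext n; field_simp; ring] at h

lemma hasDerivAt_Li2 {x : ℝ} (hx0 : x ≠ 0) (hx : |x| < 1) :
    HasDerivAt Li2 (-log (1 - x) / x) x := by
  obtain ⟨ρ, hxρ, hρ1⟩ := exists_between hx
  have hρ0 : 0 < ρ := (abs_nonneg x).trans_lt hxρ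
  rw [← (hasSum_pow_div_nat_add_one hx0 hx).tsum_eq]
  refine hasDerivAt_tsum_of_isPreconnected
    (g := fun (n : ℕ) (y : ℝ) => y ^ (n + 1) / ((n : ℝ) + 1) ^ 2)
    (g' := fun (n : ℕ) (y : ℝ) => y ^ n / ((n : ℝ) + 1)) (summable_geometric_of_lt_one hρ0.le hρ1)
    isOpen_Ioo isPreconnected_Ioo (fun n y _ => ?_) (fun n y hy => ?_)
    (show (0 : ℝ) ∈ Ioo (-ρ) ρ by simpa) (by simp) (show x ∈ Ioo (-ρ) ρ by simpa [← abs_lt])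
  · refine ((hasDerivAt_pow (n + 1) y).div_const _).congr_deriv ?_
    push_cast
    field_simp
  · rw [norm_div, norm_pow, Real.norm_of_nonneg (by positivity : (0 : ℝ) ≤ n + 1)]
    calc ‖y‖ ^ n / (n + 1) ≤ ‖y‖ ^ n := div_le_self (by positivity) (by simp)
      _ ≤ ρ ^ n := pow_le_pow_left₀ (norm_nonneg y) (abs_lt.mpr hy).le n

lemma hasDerivAt_Li2_add_Li2_one_sub_add_log_mul_log {y : ℝ} (hy : y ∈ Ioo 0 1) :
    HasDerivAt (fun y => Li2 y + Li2 (1 - y) + log y * log (1 - y)) 0 y := by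
  obtain ⟨hy0, hy1⟩ := hy
  have h1y : 0 < 1 - y := by linarith
  have hsub : HasDerivAt (fun z : ℝ => 1 - z) (-1) y := by
    simpa using (hasDerivAt_id y).const_sub 1
  have hLi2 := hasDerivAt_Li2 hy0.ne' (abs_lt.mpr ⟨by linarith, hy1⟩)
  have hLi2' := (hasDerivAt_Li2 h1y.ne' (abs_lt.mpr ⟨by linarith, by linarith⟩)).comp y hsub
  have hlog := (hasDerivAt_log hy0.ne').mul ((hasDerivAt_log h1y.ne').comp y hsub)
  refine ((hLi2.add hLi2').add hlog).congr_deriv ?_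
  simp only [Function.comp, sub_sub_cancel]
  field_simp
  ring

lemma tendsto_log_mul_log_one_sub_nhdsGT_zero :
    Tendsto (fun y => log y * log (1 - y)) (𝓝[>] 0) (𝓝 0) := by
  have hmul_log : Tendsto (fun y : ℝ => y * log y) (𝓝[>] 0) (𝓝 0) := by
    simpa using continuous_mul_log.tendsto 0 |>.mono_left nhdsWithin_le_nhds
  have hslope : Tendsto (fun y : ℝ => y⁻¹ * log (1 - y)) (𝓝[>] 0) (𝓝 (-1)) := by
    have h : HasDerivAt (fun y : ℝ => log (1 - y)) (-1) 0 := by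
      simpa using ((hasDerivAt_id (0 : ℝ)).const_sub 1).log (by norm_num)
    have hGT : 𝓝[>] (0 : ℝ) ≤ 𝓝[≠] 0 :=
      nhdsWithin_mono 0 (show Ioi (0 : ℝ) ⊆ {0}ᶜ from fun y (hy : 0 < y) => hy.ne')
    simpa using h.tendsto_slope_zero.mono_left hGT
  have h := hmul_log.mul hslope
  rw [zero_mul] at h
  refine h.congr' ?_
  filter_upwards [self_mem_nhdsWithin] with y (hy : 0 < y)
  field_simp

theorem Li2_add_Li2_one_sub {x : ℝ} (hx : x ∈ Ioo 0 1) :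
    Li2 x + Li2 (1 - x) = π ^ 2 / 6 - log x * log (1 - x) := by
  set F := fun y => Li2 y + Li2 (1 - y) + log y * log (1 - y)
  have hderiv := fun y hy => hasDerivAt_Li2_add_Li2_one_sub_add_log_mul_log (y := y) hy
  have hconst : ∀ y ∈ Ioo (0 : ℝ) 1, F y = F x := fun y hy =>
    isOpen_Ioo.is_const_of_deriv_eq_zero isPreconnected_Ioo
      (fun z hz => (hderiv z hz).differentiableAt.differentiableWithinAt)
      (fun z hz => (hderiv z hz).deriv) hy hx
  have hLi2_zero : Tendsto Li2 (𝓝[>] 0) (𝓝 0) := by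
    have h :=
      (continuousOn_Li2.continuousAt (Icc_mem_nhds (by norm_num : (-1 : ℝ) < 0) one_pos)).tendsto
    rw [Li2_zero] at h
    exact h.mono_left nhdsWithin_le_nhds
  have hLi2_one : Tendsto (fun y => Li2 (1 - y)) (𝓝[>] 0) (𝓝 (π ^ 2 / 6)) := by
    rw [← Li2_one]
    refine (continuousOn_Li2 1 (by simp)).tendsto.comp (tendsto_nhdsWithin_iff.mpr ⟨?_, ?_⟩)
    · have h : Tendsto (fun y : ℝ => 1 - y) (𝓝 0) (𝓝 1) := by
        simpa using (continuous_sub_left (1 : ℝ)).tendsto 0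
      exact h.mono_left nhdsWithin_le_nhds
    · filter_upwards [Ioo_mem_nhdsGT (zero_lt_two' ℝ)] with y hy
      constructor <;> linarith [hy.1, hy.2]
  have hlim : Tendsto F (𝓝[>] 0) (𝓝 (π ^ 2 / 6)) := by
    simpa using (hLi2_zero.add hLi2_one).add tendsto_log_mul_log_one_sub_nhdsGT_zero
  have hFx : F x = π ^ 2 / 6 := by
    refine tendsto_nhds_unique (tendsto_const_nhds.congr' ?_) hlim
    filter_upwards [Ioo_mem_nhdsGT one_pos] with y hy
    exact (hconst y hy).symm
  simp only [F] at hFx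
  linarith

lemma coe_lucas_eq : ∀ n, (lucas n : ℝ) = φ ^ n + ψ ^ n
  | 0 => by norm_num [lucas]
  | 1 => by simp [lucas, goldenRatio_add_goldenConj]
  | n + 2 => by
    rw [lucas, Nat.cast_add, coe_lucas_eq (n + 1), coe_lucas_eq n, pow_add φ n 2,
      pow_add ψ n 2, goldenRatio_sq, goldenConj_sq]
    ring

theorem stmt_18_general (r : ℕ) (hre : Even r) :
    Li2 (((1 + Real.sqrt 5) / 2) ^ r / (lucas r : ℝ))
        + Li2 (((1 - Real.sqrt 5) / 2) ^ r / (lucas r : ℝ)) =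
      Real.pi ^ 2 / 6 + (r : ℝ) ^ 2 * Real.log ((1 + Real.sqrt 5) / 2) ^ 2
        - Real.log (lucas r : ℝ) ^ 2 := by
  change Li2 (φ ^ r / lucas r) + Li2 (ψ ^ r / lucas r)
    = π ^ 2 / 6 + r ^ 2 * log φ ^ 2 - log (lucas r) ^ 2
  have hφr : 0 < φ ^ r := pow_pos goldenRatio_pos r
  have hψr : ψ ^ r = (φ ^ r)⁻¹ := by rw [← inv_pow, inv_goldenRatio, hre.neg_pow]
  have hL : (lucas r : ℝ) = φ ^ r + ψ ^ r := coe_lucas_eq r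
  have hL0 : 0 < (lucas r : ℝ) := by rw [hL, hψr]; positivity
  have hx : φ ^ r / lucas r ∈ Ioo 0 1 :=
    ⟨by positivity, (div_lt_one hL0).mpr (by rw [hL, hψr]; simp [hφr])⟩
  have h1x : 1 - φ ^ r / lucas r = ψ ^ r / lucas r := by
    rw [eq_div_iff hL0.ne', sub_mul, div_mul_cancel₀ _ hL0.ne', hL]; ring
  rw [← h1x, Li2_add_Li2_one_sub hx, h1x, log_div hφr.ne' hL0.ne',
    log_div (hψr ▸ by positivity) hL0.ne', hψr, log_inv, log_pow]
  ring

theorem stmt_18 (r : ℕ) (hr : 2 ≤ r) (hre : Even r) :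
    Li2 (((1 + Real.sqrt 5) / 2) ^ r / (lucas r : ℝ))
        + Li2 (((1 - Real.sqrt 5) / 2) ^ r / (lucas r : ℝ)) =
      Real.pi ^ 2 / 6 + (r : ℝ) ^ 2 * Real.log ((1 + Real.sqrt 5) / 2) ^ 2
        - Real.log (lucas r : ℝ) ^ 2 :=
  stmt_18_general r hre
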